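/- arXiv:1806.07271 — 4 statements merged into one kernel-verified Lean document; each statement's English description precedes it below -/
import Mathlib

section
/- Fix λ > 0 and define f₁(λ) = λ + e^{-λ} − λ²/2 and recursively f_{j+1}(λ) = f₁(λ) − e^{-f_j(λ)} for j ≥ 1. Then the sequence j ↦ f_j(λ) is strictly decreasing, i.e., f_{j+1}(λ) < f_j(λ) for all j ≥ 1. -/
/-! The map `x ↦ f₁ - e^{-x}` is strictly increasing and sends `f₁` below itself, so its orbit
`f₁, f₂, f₃, …` is strictly decreasing. -/

lemma strictMono_const_sub_exp_neg (c : ℝ) : StrictMono fun x : ℝ => c - Real.exp (-x) :=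
  fun _ _ hxy => sub_lt_sub_left (Real.exp_lt_exp.mpr (neg_lt_neg hxy)) c

lemma eq_iterate_of_forall_succ_eq {α : Type*} (g : α → α) (f : ℕ → α)
    (hrec : ∀ j : ℕ, 1 ≤ j → f (j + 1) = g (f j)) (n : ℕ) : f (n + 1) = g^[n] (f 1) := by
  induction n with
  | zero => rfl
  | succ n ih => rw [hrec (n + 1) (Nat.le_add_left 1 n), ih, Function.iterate_succ_apply']

theorem fseq_strictly_decreasing_in_index_general (f : ℕ → ℝ)
    (hrec : ∀ j : ℕ, 1 ≤ j → f (j + 1) = f 1 - Real.exp (-(f j))) :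
    ∀ j : ℕ, 1 ≤ j → f (j + 1) < f j := by
  set g : ℝ → ℝ := fun x => f 1 - Real.exp (-x)
  have horbit := eq_iterate_of_forall_succ_eq g f hrec
  have hstep : g (f 1) < f 1 := sub_lt_self _ (Real.exp_pos _)
  have hanti := (strictMono_const_sub_exp_neg (f 1)).strictAnti_iterate_of_map_lt hstep
  rintro (_ | n) hn
  · exact absurd hn (by norm_num)
  · rw [horbit (n + 1), horbit n]
    exact hanti n.lt_succ_self

/-- Fix `λ > 0` and define `f₁(λ) = λ + e^{-λ} − λ²/2` and recursively
`f_{j+1}(λ) = f₁(λ) − e^{-f_j(λ)}` for `j ≥ 1`. Then the sequence `j ↦ f_j(λ)`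
is strictly decreasing: `f_{j+1}(λ) < f_j(λ)` for all `j ≥ 1`. -/
theorem fseq_strictly_decreasing_in_index (l : ℝ) (hl : 0 < l) (f : ℕ → ℝ)
    (hf1 : f 1 = l + Real.exp (-l) - l ^ 2 / 2)
    (hrec : ∀ j : ℕ, 1 ≤ j → f (j + 1) = f 1 - Real.exp (-(f j))) :
    ∀ j : ℕ, 1 ≤ j → f (j + 1) < f j :=
  fseq_strictly_decreasing_in_index_general f hrec
end

section
/- Define f₁(λ) = λ + e^{-λ} − λ²/2 and recursively f_{j+1}(λ) = f₁(λ) − e^{-f_j(λ)}. Then for each fixed j ≥ 1, the function λ ↦ f_j(λ) is strictly decreasing on (0, ∞). -/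
/-- `f₁(λ) = λ + e^{-λ} − λ²/2`. -/
noncomputable def f1 (l : ℝ) : ℝ := l + Real.exp (-l) - l ^ 2 / 2

/-- `fseq n l` is `f_{n+1}(λ)` of the paper: `f_{j+1}(λ) = f₁(λ) − e^{-f_j(λ)}`. -/
noncomputable def fseq : ℕ → ℝ → ℝ
  | 0 => f1
  | n + 1 => fun l => f1 l - Real.exp (-(fseq n l))

/-!
`f₁' (λ) = 1 - λ - e^{-λ} < 0` for `λ ≠ 0` by `e^x > 1 + x`, so `f₁` decreases on `(0, ∞)`.
If `f_j` decreases, then `e^{-f_j}` increases, so `f_{j+1} = f₁ - e^{-f_j}` decreases as well.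
-/

open Real Set

lemma hasDerivAt_f1 (l : ℝ) : HasDerivAt f1 (1 - exp (-l) - l) l := by
  have h := ((hasDerivAt_id l).add (hasDerivAt_neg l).exp).sub ((hasDerivAt_pow 2 l).div_const 2)
  exact h.congr_deriv (by simp only [mul_neg, mul_one]; ring)

lemma f1_deriv_neg {l : ℝ} (hl : l ≠ 0) : 1 - exp (-l) - l < 0 := by
  linarith [add_one_lt_exp (neg_ne_zero.mpr hl)]

lemma f1_strictAntiOn : StrictAntiOn f1 (Ioi 0) :=
  strictAntiOn_of_hasDerivWithinAt_neg (convex_Ioi 0)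
    (fun l _ => (hasDerivAt_f1 l).continuousAt.continuousWithinAt)
    (fun l _ => (hasDerivAt_f1 l).hasDerivWithinAt)
    (fun l hl => f1_deriv_neg (by rw [interior_Ioi] at hl; exact (ne_of_lt hl).symm))

lemma StrictAntiOn.sub_exp_neg {α : Type*} [Preorder α] {f g : α → ℝ} {s : Set α}
    (hf : StrictAntiOn f s) (hg : AntitoneOn g s) :
    StrictAntiOn (fun x => f x - exp (-g x)) s := by
  intro a ha b hb hab
  have hexp : exp (-g a) ≤ exp (-g b) := exp_le_exp.mpr (neg_le_neg (hg ha hb hab.le))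
  linarith [hf ha hb hab]

/-- For each fixed `j ≥ 1`, the function `λ ↦ f_j(λ)` is strictly decreasing on `(0, ∞)`. -/
theorem fseq_strictAnti_in_lambda (n : ℕ) :
    StrictAntiOn (fun l : ℝ => fseq n l) (Set.Ioi (0:ℝ)) := by
  induction n with
  | zero => exact f1_strictAntiOn
  | succ n ih => exact f1_strictAntiOn.sub_exp_neg ih.antitoneOn
end

section
/- Fix λ ∈ (0, 0.9012] and define f₁(λ) = λ + e^{-λ} − λ²/2 and f_{j+1}(λ) = f₁(λ) − e^{-f_j(λ)}. If f_{B-1}(λ) = −log(e^{-λ} − λ²/2) for some B ≥ 2 (i.e., λ is a root of p_B^{rbr}), then f_{B-1}(λ) > λ, and consequently f_j(λ) > λ > 0 for all 1 ≤ j ≤ B−1. -/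
/-!
Since `0 < e^{-λ} − λ²/2 < e^{-λ}` on `(0, 0.9012]`, the root condition forces
`f_{B-1}(λ) = −log(e^{-λ} − λ²/2) > λ`. The thresholds decrease in `j`, because
`x ↦ f₁(λ) − e^{-x}` is increasing and `f₂(λ) < f₁(λ)`, so all earlier ones exceed `λ` too.
-/

open Real

lemma fseq_succ_le_fseq (l : ℝ) (n : ℕ) : fseq (n + 1) l ≤ fseq n l := by
  induction n with
  | zero =>
    show f1 l - exp (-fseq 0 l) ≤ f1 l
    linarith [exp_pos (-fseq 0 l)]
  | succ n ih =>
    show f1 l - exp (-fseq (n + 1) l) ≤ f1 l - exp (-fseq n l)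
    linarith [exp_le_exp.mpr (neg_le_neg ih)]

lemma fseq_antitone (l : ℝ) : Antitone (fseq · l) :=
  antitone_nat_of_succ_le (fseq_succ_le_fseq l)

-- `0.9012` lies just below the root `≈ 0.901201` of `e^{-λ} = λ²/2`, hence the 13 Taylor terms.
lemma exp_0_9012_lt : exp 0.9012 < 2.4625645 :=
  calc exp 0.9012
      ≤ ∑ m ∈ Finset.range 13, (0.9012 : ℝ) ^ m / m.factorial
          + 0.9012 ^ 13 * (13 + 1) / (Nat.factorial 13 * 13) :=
        exp_bound' (by norm_num) (by norm_num) (by norm_num)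
    _ < 2.4625645 := by norm_num [Finset.sum_range_succ, Nat.factorial]

lemma exp_neg_sub_sq_half_pos {l : ℝ} (hl : 0 ≤ l) (hl' : l ≤ 0.9012) :
    0 < exp (-l) - l ^ 2 / 2 := by
  have hexp : (0.9012 : ℝ) ^ 2 / 2 < exp (-0.9012) := by
    rw [exp_neg, lt_inv_comm₀ (by norm_num) (exp_pos _)]
    exact exp_0_9012_lt.trans (by norm_num)
  have hmono : exp (-0.9012) ≤ exp (-l) := exp_le_exp.mpr (by linarith)
  nlinarith

theorem thresholds_exceed_lambda_general (l : ℝ) (hl : 0 < l) (hl' : l ≤ 0.9012)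
    (B : ℕ)
    (hroot : fseq (B - 2) l = -Real.log (Real.exp (-l) - l ^ 2 / 2)) :
    l < fseq (B - 2) l ∧ ∀ j : ℕ, 1 ≤ j → j ≤ B - 1 → l < fseq (j - 1) l := by
  have hpos := exp_neg_sub_sq_half_pos hl.le hl'
  have hlast : l < fseq (B - 2) l := by
    rw [hroot, lt_neg, log_lt_iff_lt_exp hpos]
    exact sub_lt_self _ (by positivity)
  exact ⟨hlast, fun j _ hj => hlast.trans_le (fseq_antitone l (by omega))⟩

/-- Fix `λ ∈ (0, 0.9012]` and `B ≥ 2`. If `f_{B-1}(λ) = −log(e^{-λ} − λ²/2)`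
(i.e. `λ` is a root of `p_B^{rbr}`), then `f_{B-1}(λ) > λ`, and consequently
`f_j(λ) > λ > 0` for all `1 ≤ j ≤ B−1`. -/
theorem thresholds_exceed_lambda (l : ℝ) (hl : 0 < l) (hl' : l ≤ 0.9012)
    (B : ℕ) (hB : 2 ≤ B)
    (hroot : fseq (B - 2) l = -Real.log (Real.exp (-l) - l ^ 2 / 2)) :
    l < fseq (B - 2) l ∧ ∀ j : ℕ, 1 ≤ j → j ≤ B - 1 → l < fseq (j - 1) l :=
  thresholds_exceed_lambda_general l hl hl' B hroot
end

section
/- Let λ ∈ (0, 0.9012) so that e^{-λ} − λ²/2 > 0, let y₄(t) = max(λ, t), and let x₃ = −log(e^{-λ} − λ²/2). Then x₃ satisfies the equation e^{x₃}·∫₀^{x₃} ((1/2)y₄(τ)² − λ·y₄(τ))·e^{-τ} dτ + (1/2)x₃² − λ·x₃ = λ − x₃, and moreover x₃ > λ. -/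
open MeasureTheory Real

/-!
On `[0, λ]` the integrand is the constant `-λ²/2` times `e^{-τ}`, and on `[λ, x]` it is a
quadratic times `e^{-τ}`; both integrate in closed form, and the integral over `(0, x)` comes
out as `u - e^{-x} (x²/2 + (1-λ)x + 1 - λ)` with `u = e^{-λ} - λ²/2`. Since `e^{x₃} u = 1`,
multiplying by `e^{x₃}` leaves a polynomial identity. Finally `x₃ > λ` because `u < e^{-λ}`.
-/

/-- The antiderivative factor is `p + p' + p''` for `p = α t² + β t + γ`. -/
theorem hasDerivAt_quadratic_mul_exp_neg (α β γ t : ℝ) :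
    HasDerivAt (fun s => -(α * s ^ 2 + (β + 2 * α) * s + (γ + β + 2 * α)) * exp (-s))
      ((α * t ^ 2 + β * t + γ) * exp (-t)) t := by
  have hexp : HasDerivAt (fun s => exp (-s)) (-exp (-t)) t := by
    simpa using (hasDerivAt_neg t).exp
  have hpoly : HasDerivAt (fun s => -(α * s ^ 2 + (β + 2 * α) * s + (γ + β + 2 * α)))
      (-(α * (2 * t) + (β + 2 * α))) t := by
    have := (((hasDerivAt_pow 2 t).const_mul α).add
      ((hasDerivAt_id t).const_mul (β + 2 * α))).add_const (γ + β + 2 * α)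
    exact this.neg.congr_deriv (by ring)
  exact (hpoly.mul hexp).congr_deriv (by ring)

theorem integral_quadratic_mul_exp_neg (α β γ a b : ℝ) :
    ∫ t in a..b, (α * t ^ 2 + β * t + γ) * exp (-t) =
      (α * a ^ 2 + (β + 2 * α) * a + (γ + β + 2 * α)) * exp (-a) -
        (α * b ^ 2 + (β + 2 * α) * b + (γ + β + 2 * α)) * exp (-b) := by
  rw [intervalIntegral.integral_eq_sub_of_hasDerivAt
    (fun t _ => hasDerivAt_quadratic_mul_exp_neg α β γ t)
    ((by fun_prop : Continuous fun t => (α * t ^ 2 + β * t + γ) * exp (-t)).intervalIntegrable a b)]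
  ring

theorem integral_Ioo_max_mul_exp_neg {l x : ℝ} (hl : 0 ≤ l) (hlx : l ≤ x) :
    ∫ τ in Set.Ioo 0 x, ((1/2) * (max l τ) ^ 2 - l * max l τ) * exp (-τ) =
      exp (-l) - l ^ 2 / 2 - (x ^ 2 / 2 + (1 - l) * x + (1 - l)) * exp (-x) := by
  have hcont : Continuous fun τ => ((1/2) * (max l τ) ^ 2 - l * max l τ) * exp (-τ) := by
    fun_prop
  have below : ∫ τ in (0)..l, ((1/2) * (max l τ) ^ 2 - l * max l τ) * exp (-τ) =
      ∫ τ in (0)..l, (0 * τ ^ 2 + 0 * τ + -(l ^ 2 / 2)) * exp (-τ) := by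
    refine intervalIntegral.integral_congr fun τ hτ => ?_
    rw [Set.uIcc_of_le hl] at hτ
    simp only [max_eq_left hτ.2]
    ring
  have above : ∫ τ in l..x, ((1/2) * (max l τ) ^ 2 - l * max l τ) * exp (-τ) =
      ∫ τ in l..x, ((1/2) * τ ^ 2 + (-l) * τ + 0) * exp (-τ) := by
    refine intervalIntegral.integral_congr fun τ hτ => ?_
    rw [Set.uIcc_of_le hlx] at hτ
    simp only [max_eq_right hτ.1]
    ring
  rw [← integral_Ioc_eq_integral_Ioo, ← intervalIntegral.integral_of_le (hl.trans hlx),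
    ← intervalIntegral.integral_add_adjacent_intervals (hcont.intervalIntegrable 0 l)
      (hcont.intervalIntegrable l x), below, above, integral_quadratic_mul_exp_neg,
    integral_quadratic_mul_exp_neg, neg_zero, exp_zero]
  ring

theorem exp_neg_sub_sq_div_two_pos {l : ℝ} (h0 : 0 ≤ l) (h1 : l ≤ 0.9012) :
    0 < exp (-l) - l ^ 2 / 2 := by
  have hexp : exp 0.9012 < 2 / 0.9012 ^ 2 := by
    refine (exp_bound' (by norm_num) (by norm_num) (n := 12) (by norm_num)).trans_lt ?_
    simp only [Finset.sum_range_succ, Finset.sum_range_zero]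
    norm_num [Nat.factorial]
  have hexp_neg : 0.9012 ^ 2 / 2 < exp (-0.9012) := by
    rw [exp_neg, lt_inv_comm₀ (by norm_num) (exp_pos _)]
    simpa using hexp
  have hmono : exp (-0.9012) ≤ exp (-l) := exp_le_exp.2 (by linarith)
  nlinarith

/-- For `λ ∈ (0, 0.9012)` (so `e^{-λ} − λ²/2 > 0`), `y₄(t) = max(λ, t)` and
`x₃ = −log(e^{-λ} − λ²/2)`, the threshold `x₃` satisfies the KKT equation
`e^{x₃}·∫₀^{x₃}((1/2)y₄(τ)² − λy₄(τ))e^{-τ}dτ + (1/2)x₃² − λx₃ = λ − x₃`,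
and moreover `x₃ > λ`. -/
theorem ibr_threshold_x3 (l : ℝ) (hl : l ∈ Set.Ioo (0:ℝ) 0.9012)
    (y4 : ℝ → ℝ) (hy4 : ∀ t, y4 t = max l t)
    (x3 : ℝ) (hx3 : x3 = -Real.log (Real.exp (-l) - l ^ 2 / 2)) :
    0 < Real.exp (-l) - l ^ 2 / 2 ∧
    Real.exp x3 * (∫ τ in Set.Ioo (0:ℝ) x3,
        ((1/2) * (y4 τ) ^ 2 - l * y4 τ) * Real.exp (-τ))
      + (1/2) * x3 ^ 2 - l * x3 = l - x3 ∧
    l < x3 := by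
  obtain ⟨hl0, hl1⟩ := hl
  have hu := exp_neg_sub_sq_div_two_pos hl0.le hl1.le
  have hlx : l < x3 := by
    have := log_lt_log hu (show exp (-l) - l ^ 2 / 2 < exp (-l) by nlinarith)
    rw [log_exp] at this
    linarith
  have hexp_neg : exp (-x3) = exp (-l) - l ^ 2 / 2 := by
    rw [hx3, neg_neg, exp_log hu]
  have hexp_mul : exp x3 * exp (-x3) = 1 := by rw [← exp_add, add_neg_cancel, exp_zero]
  refine ⟨hu, ?_, hlx⟩
  simp only [hy4, integral_Ioo_max_mul_exp_neg hl0.le hlx.le, ← hexp_neg]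
  linear_combination (1 - (x3 ^ 2 / 2 + (1 - l) * x3 + (1 - l))) * hexp_mul
end
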